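/- The chromatic number of the Hadamard graph G_12 is strictly greater than 12. -/

import Mathlib

/-!
A `12`-colouring of `G_12` would have a colour class `I` with more than `4096 / 12`, i.e. at least
`342`, vertices. On the other hand, with `+` the coordinatewise xor, `G_12` is a Cayley graph of
`(Fin 12 → Bool, +)` containing a `12`-clique `C` (the rows of a Hadamard matrix of order `12`),
and for a clique `C` and an independent set `I` of a Cayley graph the map `(c, i) ↦ -c + i` is
injective on `C × I`. Hence `12 * 342 ≤ |C| * |I| ≤ 4096`, a contradiction.
-/

def hadamardGraph12 : SimpleGraph (Fin 12 → Bool) where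
  Adj u v := u ≠ v ∧ hammingDist u v = 6
  symm := ⟨by
    intro u v h
    exact ⟨h.1.symm, by rw [hammingDist_comm]; exact h.2⟩⟩
  loopless := ⟨by intro u h; exact h.1 rfl⟩

open Finset

namespace SimpleGraph

theorem Colorable.exists_isIndepSet_lt_card {V : Type*} [Fintype V] {G : SimpleGraph V}
    {n m : ℕ} (hG : G.Colorable n) (h : n * m < Fintype.card V) :
    ∃ I : Finset V, G.IsIndepSet (I : Set V) ∧ m < #I := by
  classical
  obtain ⟨C⟩ := hG
  obtain ⟨c, hc⟩ := Fintype.exists_lt_card_fiber_of_mul_lt_card (f := C) (by simpa using h)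
  refine ⟨({v | C v = c} : Finset V), ?_, hc⟩
  simpa [Coloring.colorClass] using C.isIndepSet_colorClass c

theorem IsNClique.mul_card_le_of_isIndepSet {A : Type*} [AddGroup A] [Fintype A]
    {G : SimpleGraph A} (hG : ∀ x u v, G.Adj u v → G.Adj (u + x) (v + x))
    {k : ℕ} {C I : Finset A} (hC : G.IsNClique k C) (hI : G.IsIndepSet (I : Set A)) :
    k * #I ≤ Fintype.card A := by
  classical
  rw [← hC.card_eq, ← card_product, ← card_univ]
  refine card_le_card_of_injOn (fun p => -p.1 + p.2) (fun _ _ => mem_univ _) ?_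
  rintro ⟨c, i⟩ hci ⟨c', i'⟩ hci' hx
  simp only [coe_product, Set.mem_prod, mem_coe] at hci hci' hx
  have hi' : i' = c' + (-c + i) := by rw [hx, add_neg_cancel_left]
  by_cases hcc : c = c'
  · simp [hcc, hi']
  · have hadj : G.Adj i i' := by
      simpa only [add_neg_cancel_left, ← hi'] using
        hG (-c + i) c c' (hC.isClique hci.1 hci'.1 hcc)
    refine absurd hadj (hI hci.2 hci'.2 fun hii => hcc ?_)
    subst hii
    simpa using hx

end SimpleGraph

theorem hadamardGraph12_adj_add_right (x u v : Fin 12 → Bool) (h : hadamardGraph12.Adj u v) :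
    hadamardGraph12.Adj (u + x) (v + x) :=
  ⟨fun huv => h.1 (add_right_cancel huv),
    (hammingDist_comp (fun i => (· + x i)) fun i => add_left_injective (x i)).trans h.2⟩

/-- Rows of the Paley–Hadamard matrix of order `12` built from the squares mod `11`, with `true`
for `+1`. -/
def paleyCodeword : Option (ZMod 11) → Fin 12 → Bool
  | none => fun _ => true
  | some a => Fin.cons true fun k => !decide (IsSquare (((k : ℕ) : ZMod 11) - a))

theorem hammingDist_paleyCodeword :
    ∀ i j, i ≠ j → hammingDist (paleyCodeword i) (paleyCodeword j) = 6 := by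
  decide

theorem isNClique_image_paleyCodeword :
    hadamardGraph12.IsNClique 12 (univ.image paleyCodeword) := by
  have hadj {i j} (h : i ≠ j) : hadamardGraph12.Adj (paleyCodeword i) (paleyCodeword j) :=
    ⟨fun he => by simpa [he] using hammingDist_paleyCodeword i j h, hammingDist_paleyCodeword i j h⟩
  refine ⟨?_, ?_⟩
  · simp only [coe_image, coe_univ, Set.image_univ]
    rintro _ ⟨i, rfl⟩ _ ⟨j, rfl⟩ hne
    exact hadj fun h => hne (h ▸ rfl)
  · rw [card_image_of_injective _ fun i j he => not_not.1 fun h => (hadj h).ne he]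
    simp

/-- The chromatic number of the Hadamard graph `G_12` is strictly greater than 12. -/
theorem chromaticNumber_G12_gt_12 : (12 : ℕ∞) < hadamardGraph12.chromaticNumber := by
  refine lt_of_not_ge fun h12 => ?_
  have hcol : hadamardGraph12.Colorable 12 := SimpleGraph.chromaticNumber_le_iff_colorable.1 h12
  obtain ⟨I, hI, hI_card⟩ := hcol.exists_isIndepSet_lt_card (m := 341) (by simp)
  have hclique := isNClique_image_paleyCodeword.mul_card_le_of_isIndepSet
    hadamardGraph12_adj_add_right hI
  have hcard : Fintype.card (Fin 12 → Bool) = 4096 := by simp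
  omega
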